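/- arXiv:1308.0398 — 3 statements merged into one kernel-verified Lean document; each statement's English description precedes it below -/
import Mathlib

section
/- Let G be a finite group acting transitively on a finite set V of size v, let 2 ≤ k ≤ v/2, let γ be a k-element subset of V, and let S be the setwise stabiliser of γ in G. Suppose S acts transitively on the set of pairs (u,w) with u ∈ γ and w ∈ V∖γ. Then there exist an integer ℓ ≥ 1 and a chain of subgroups S = H₀ < H₁ < ⋯ < H_ℓ = G such that each Hᵢ is a maximal subgroup of Hᵢ₊₁ for 0 ≤ i < ℓ, each Hᵢ with 1 ≤ i ≤ ℓ acts transitively on V, and the orbits of H₀ = S on V are exactly γ and V∖γ. -/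
/-!
The stabiliser `S` of `γ` is transitive on `γ` and on `γᶜ`. An element of an overgroup `J > S`
outside `S` carries some point across the boundary of `γ`, which merges these two `S`-orbits
into one `J`-orbit: every proper overgroup of `S` is transitive on `V`. As `γ` and `γᶜ` are
nonempty, `S < G`, and refining `S < G` into covering steps in the finite lattice of subgroups
gives the chain.
-/

open Pointwise

theorem exists_covBy_chain_of_lt {α : Type*} [PartialOrder α] [WellFoundedLT α]
    [WellFoundedGT α] {x y : α} (h : x < y) :
    ∃ (ℓ : ℕ) (a : ℕ → α), 1 ≤ ℓ ∧ a 0 = x ∧ a ℓ = y ∧ ∀ i < ℓ, a i ⋖ a (i + 1) := by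
  obtain ⟨a, ha0, ℓ, haℓ, hcov⟩ := exists_covBy_seq_of_wellFoundedLT_wellFoundedGT_of_le h.le
  refine ⟨ℓ, a, Nat.one_le_iff_ne_zero.2 ?_, ha0, haℓ, hcov⟩
  rintro rfl
  exact h.ne (ha0.symm.trans haℓ)

theorem lt_of_covBy_chain {α : Type*} [Preorder α] {a : ℕ → α} {ℓ : ℕ}
    (hcov : ∀ i < ℓ, a i ⋖ a (i + 1)) {i : ℕ} (hi : 1 ≤ i) (hiℓ : i ≤ ℓ) : a 0 < a i :=
  strictMonoOn_Iic_of_lt_succ (fun m hm => by simpa using (hcov m hm).lt)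
    (Set.mem_Iic.2 (Nat.zero_le ℓ)) hiℓ hi

namespace MulAction

variable {G V : Type*} [Group G] [MulAction G V] {γ : Set V}

theorem stabilizer_set_lt_top (htrans : ∀ x y : V, ∃ g : G, g • x = y) {u w : V}
    (hu : u ∈ γ) (hw : w ∉ γ) : stabilizer G γ < ⊤ := by
  refine lt_top_iff_ne_top.2 fun htop => ?_
  obtain ⟨g, rfl⟩ := htrans u w
  exact hw ((mem_stabilizer_set.1 (htop ▸ Subgroup.mem_top g) u).2 hu)

theorem exists_mem_stabilizer_smul_eq_of_mem_iff {u₀ w₀ : V} (hu₀ : u₀ ∈ γ) (hw₀ : w₀ ∉ γ)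
    (hpairs : ∀ u u' w w' : V, u ∈ γ → u' ∈ γ → w ∉ γ → w' ∉ γ →
      ∃ g ∈ stabilizer G γ, g • u = u' ∧ g • w = w') :
    ∀ x y : V, (x ∈ γ ↔ y ∈ γ) → ∃ s ∈ stabilizer G γ, s • x = y := by
  intro x y hxy
  by_cases hx : x ∈ γ
  · obtain ⟨s, hs, hsx, -⟩ := hpairs x y w₀ w₀ hx (hxy.1 hx) hw₀ hw₀
    exact ⟨s, hs, hsx⟩
  · obtain ⟨s, hs, -, hsx⟩ := hpairs u₀ u₀ x y hu₀ hu₀ hx (hxy.not.1 hx)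
    exact ⟨s, hs, hsx⟩

theorem orbit_stabilizer_set_eq
    (hsides : ∀ x y : V, (x ∈ γ ↔ y ∈ γ) → ∃ s ∈ stabilizer G γ, s • x = y) (u : V) :
    orbit (stabilizer G γ) u = {x | x ∈ γ ↔ u ∈ γ} := by
  ext x
  constructor
  · rintro ⟨⟨s, hs⟩, rfl⟩
    exact mem_stabilizer_set.1 hs u
  · intro hx
    obtain ⟨s, hs, rfl⟩ := hsides u x hx.symm
    exact ⟨⟨s, hs⟩, rfl⟩

theorem exists_mem_smul_eq_of_stabilizer_lt
    (hsides : ∀ x y : V, (x ∈ γ ↔ y ∈ γ) → ∃ s ∈ stabilizer G γ, s • x = y)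
    {J : Subgroup G} (hJ : stabilizer G γ < J) (x y : V) : ∃ g ∈ J, g • x = y := by
  obtain ⟨g, hgJ, hgS⟩ := SetLike.exists_of_lt hJ
  obtain ⟨z, hz⟩ : ∃ z, ¬(g • z ∈ γ ↔ z ∈ γ) := by
    simpa only [mem_stabilizer_set, not_forall] using hgS
  have hside : ∀ x y, (x ∈ γ ↔ y ∈ γ) → orbit J x = orbit J y := by
    intro x y hxy
    obtain ⟨s, hs, rfl⟩ := hsides x y hxy
    exact (orbit_smul (⟨s, hJ.le hs⟩ : J) x).symm
  have hcross : orbit J (g • z) = orbit J z := orbit_smul (⟨g, hgJ⟩ : J) z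
  have hall : ∀ x, orbit J x = orbit J z := by
    intro x
    by_cases hx : x ∈ γ ↔ z ∈ γ
    · exact hside x z hx
    · rw [← hcross]
      exact hside x (g • z) (by tauto)
  obtain ⟨⟨j, hj⟩, hjx⟩ := orbit_eq_iff.1 ((hall y).trans (hall x).symm)
  exact ⟨j, hj, hjx⟩

end MulAction

/-- Lemma 1.4 (Lemma `thelemma`): if a finite group `G` acts transitively on a finite
set `V` of size `v`, `2 ≤ k ≤ v/2`, `γ` is a `k`-subset of `V`, and the setwise
stabiliser `S` of `γ` acts transitively on `γ × (V ∖ γ)`, then there is a chain of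
subgroups `S = H₀ < H₁ < ⋯ < H_ℓ = G` with each `Hᵢ` maximal in `Hᵢ₊₁`, each `Hᵢ`
(`1 ≤ i ≤ ℓ`) transitive on `V`, and the orbits of `S` on `V` exactly `γ` and `V ∖ γ`. -/
theorem stmt_0 {G V : Type*} [Group G] [Finite G] [Fintype V] [MulAction G V]
    (htrans : ∀ x y : V, ∃ g : G, g • x = y)
    (k : ℕ) (hk2 : 2 ≤ k) (hkv : 2 * k ≤ Fintype.card V)
    (γ : Set V) (hγk : γ.ncard = k)
    (hpairs : ∀ u u' w w' : V, u ∈ γ → u' ∈ γ → w ∉ γ → w' ∉ γ →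
      ∃ g ∈ MulAction.stabilizer G γ, g • u = u' ∧ g • w = w') :
    ∃ (ℓ : ℕ) (H : ℕ → Subgroup G), 1 ≤ ℓ ∧
      H 0 = MulAction.stabilizer G γ ∧ H ℓ = ⊤ ∧
      (∀ i, i < ℓ → H i < H (i + 1) ∧
        ∀ J : Subgroup G, H i < J → J ≤ H (i + 1) → J = H (i + 1)) ∧
      (∀ i, 1 ≤ i → i ≤ ℓ → ∀ x y : V, ∃ g ∈ H i, g • x = y) ∧
      (∀ u ∈ γ, MulAction.orbit (H 0) u = γ) ∧
      (∀ w, w ∉ γ → MulAction.orbit (H 0) w = γᶜ) := by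
  obtain ⟨u₀, hu₀⟩ : γ.Nonempty := Set.nonempty_of_ncard_ne_zero (by omega)
  obtain ⟨w₀, hw₀⟩ : γᶜ.Nonempty := Set.nonempty_of_ncard_ne_zero <| by
    have := Set.ncard_add_ncard_compl γ
    rw [Nat.card_eq_fintype_card] at this
    omega
  have hsides := MulAction.exists_mem_stabilizer_smul_eq_of_mem_iff hu₀ hw₀ hpairs
  obtain ⟨ℓ, H, hℓ, h0, hℓtop, hcov⟩ :=
    exists_covBy_chain_of_lt (MulAction.stabilizer_set_lt_top htrans hu₀ hw₀)
  refine ⟨ℓ, H, hℓ, h0, hℓtop, fun i hi => ⟨(hcov i hi).lt, fun J hJ hJle =>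
      hJle.eq_or_lt.resolve_right ((hcov i hi).2 hJ)⟩, ?_, ?_, ?_⟩
  · exact fun i hi hiℓ => MulAction.exists_mem_smul_eq_of_stabilizer_lt hsides
      (h0 ▸ lt_of_covBy_chain hcov hi hiℓ)
  · intro u hu
    rw [h0, MulAction.orbit_stabilizer_set_eq hsides]
    simp [hu]
  · intro w hw
    rw [h0, MulAction.orbit_stabilizer_set_eq hsides]
    simp [hw, Set.compl_def]
end

section
/- Let G be a group acting on a set V, let γ ⊆ V be a nonempty subset with nonempty complement, and let S be the setwise stabiliser of γ in G. Suppose S acts transitively on γ and transitively on V∖γ. If H is a subgroup of G with S ≤ H and H does not act transitively on V, then H = S. -/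
open Pointwise

/-- If `G` acts on `V`, `γ ⊆ V` is nonempty with nonempty complement, and the setwise
stabiliser `S` of `γ` acts transitively on `γ` and on `V ∖ γ`, then any subgroup `H`
of `G` containing `S` which is not transitive on `V` equals `S`. -/
theorem stmt_1 {G V : Type*} [Group G] [MulAction G V]
    (γ : Set V) (hne : γ.Nonempty) (hcne : γᶜ.Nonempty)
    (h1 : ∀ u ∈ γ, ∀ u' ∈ γ, ∃ g ∈ MulAction.stabilizer G γ, g • u = u')
    (h2 : ∀ w ∈ γᶜ, ∀ w' ∈ γᶜ, ∃ g ∈ MulAction.stabilizer G γ, g • w = w')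
    (H : Subgroup G) (hSH : MulAction.stabilizer G γ ≤ H)
    (hH : ¬ ∀ x y : V, ∃ g ∈ H, g • x = y) :
    H = MulAction.stabilizer G γ := by
  -- Key claim: every element of H maps γ into γ.
  have key : ∀ h ∈ H, ∀ u ∈ γ, h • u ∈ γ := by
    intro h hh u hu
    by_contra hout
    have hout' : h • u ∈ γᶜ := hout
    -- from u we can reach any point of V using H
    have reach : ∀ z : V, ∃ g ∈ H, g • u = z := by
      intro z
      by_cases hz : z ∈ γ
      · obtain ⟨g, hg, hgu⟩ := h1 u hu z hz
        exact ⟨g, hSH hg, hgu⟩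
      · obtain ⟨g, hg, hgu⟩ := h2 (h • u) hout' z hz
        exact ⟨g * h, H.mul_mem (hSH hg) hh, by rw [mul_smul, hgu]⟩
    apply hH
    intro x y
    obtain ⟨g1, hg1, hg1u⟩ := reach x
    obtain ⟨g2, hg2, hg2u⟩ := reach y
    refine ⟨g2 * g1⁻¹, H.mul_mem hg2 (H.inv_mem hg1), ?_⟩
    rw [mul_smul, ← hg1u, inv_smul_smul, hg2u]
  apply le_antisymm
  · intro h hh
    rw [MulAction.mem_stabilizer_iff]
    apply le_antisymm
    · rintro _ ⟨u, hu, rfl⟩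
      exact key h hh u hu
    · intro u hu
      have : h⁻¹ • u ∈ γ := key h⁻¹ (H.inv_mem hh) u hu
      exact ⟨h⁻¹ • u, this, by simp⟩
  · exact hSH
end

section
/- Let G be a group acting on a finite set V of size v, let γ ⊆ V be a nonempty subset with |γ| ≤ v/2, and let S be the setwise stabiliser of γ in G. Suppose S acts transitively on the set of pairs (u,w) with u ∈ γ and w ∈ V∖γ. Let H be a subgroup of G with S ≤ H such that H acts transitively on V, and let N be a normal subgroup of H that does not act transitively on V. Then γ is a union of N-orbits, i.e., for every u ∈ γ the N-orbit of u is contained in γ. -/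
open Pointwise

/-- Lemma 2.1: let `G` act on a finite set `V` of size `v`, let `γ ⊆ V` be nonempty with
`|γ| ≤ v/2`, and suppose the setwise stabiliser `S` of `γ` is transitive on the pairs
`(u, w)` with `u ∈ γ`, `w ∈ V ∖ γ`. If `S ≤ H ≤ G`, `H` is transitive on `V`, and `N`
is a normal subgroup of `H` that is not transitive on `V`, then `γ` is a union of
`N`-orbits. -/
theorem stmt_3 {G V : Type*} [Group G] [Fintype V] [MulAction G V]
    (γ : Set V) (hne : γ.Nonempty) (hhalf : 2 * γ.ncard ≤ Fintype.card V)
    (hpairs : ∀ u u' w w' : V, u ∈ γ → u' ∈ γ → w ∉ γ → w' ∉ γ →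
      ∃ g ∈ MulAction.stabilizer G γ, g • u = u' ∧ g • w = w')
    (H : Subgroup G) (hSH : MulAction.stabilizer G γ ≤ H)
    (hHtrans : ∀ x y : V, ∃ h ∈ H, h • x = y)
    (N : Subgroup G) (hNH : N ≤ H)
    (hNnormal : ∀ h ∈ H, ∀ n ∈ N, h * n * h⁻¹ ∈ N)
    (hNnt : ¬ ∀ x y : V, ∃ n ∈ N, n • x = y) :
    ∀ u ∈ γ, MulAction.orbit N u ⊆ γ := by
  intro u hu x hx
  by_contra hxγ
  obtain ⟨⟨n, hnN⟩, hn⟩ := hx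
  simp only [Subgroup.mk_smul] at hn
  -- every point of γ is N-connected to every point outside γ
  have key : ∀ u' ∈ γ, ∀ w', w' ∉ γ → ∃ m ∈ N, m • u' = w' := by
    intro u' hu' w' hw'
    obtain ⟨g, hgS, hgu, hgw⟩ := hpairs u u' x w' hu hu' hxγ hw'
    refine ⟨g * n * g⁻¹, hNnormal g (hSH hgS) n hnN, ?_⟩
    have : g⁻¹ • u' = u := by rw [← hgu, inv_smul_smul]
    rw [mul_smul, mul_smul, this, hn, hgw]
  -- complement is nonempty
  have hVpos : 0 < Fintype.card V := Fintype.card_pos_iff.2 ⟨u⟩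
  have hγne : γ ≠ Set.univ := by
    intro h
    have : γ.ncard = Fintype.card V := by
      rw [h, Set.ncard_univ, Nat.card_eq_fintype_card]
    omega
  obtain ⟨w₀, hw₀⟩ : ∃ w₀, w₀ ∉ γ := by
    by_contra h
    push_neg at h
    exact hγne (Set.eq_univ_of_forall h)
  obtain ⟨u₀, hu₀⟩ := hne
  -- N is transitive: contradiction
  apply hNnt
  intro a b
  by_cases ha : a ∈ γ <;> by_cases hb : b ∈ γ
  · obtain ⟨m₁, hm₁, e₁⟩ := key a ha w₀ hw₀
    obtain ⟨m₂, hm₂, e₂⟩ := key b hb w₀ hw₀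
    refine ⟨m₂⁻¹ * m₁, mul_mem (inv_mem hm₂) hm₁, ?_⟩
    rw [mul_smul, e₁, ← e₂, inv_smul_smul]
  · exact key a ha b hb
  · obtain ⟨m, hm, e⟩ := key b hb a ha
    exact ⟨m⁻¹, inv_mem hm, by rw [← e, inv_smul_smul]⟩
  · obtain ⟨m₁, hm₁, e₁⟩ := key u₀ hu₀ a ha
    obtain ⟨m₂, hm₂, e₂⟩ := key u₀ hu₀ b hb
    refine ⟨m₂ * m₁⁻¹, mul_mem hm₂ (inv_mem hm₁), ?_⟩
    rw [mul_smul, ← e₁, inv_smul_smul, e₂]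
end
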